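/- For every integer T, the code C_{T,n} contains exactly (n−1)! permutations. -/

import Mathlib

/-!
Within the product `Φ(a) = κ_{n-1,a_0} ∘ κ_{n-2,a_1} ∘ ⋯`, the first `m + 1` factors send
`n - a_m` to `n - 1 - m`: the last of them does, and the earlier ones fix every point below their
block. So the prefix products of `Φ(a)` recover `a` one coordinate at a time and `Φ` is injective
on `V_n`, whence `|C_{T,n}| = |W_{T,n}|`. Dropping the last coordinate is a bijection
`W_{T,n} → V_{n-1}`, since the parity condition leaves exactly one admissible value in `[1, n]`
for it; and `|V_{n-1}| = 1 · 2 ⋯ (n-1)`.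
-/

/-- Underlying function of the suffix block transposition `κ_{i,s}`:
`j ↦ j` for `j < i`, and `j ↦ i + ((j - i + s) mod (n - i))` for `i ≤ j ≤ n-1`. -/
def kappaFun (n i s : ℕ) (j : Fin n) : Fin n :=
  if h : (j : ℕ) < i then j
  else ⟨i + (((j : ℕ) - i + s) % (n - i)), by
    have hj := j.isLt
    have hpos : 0 < n - i := by omega
    have hm := Nat.mod_lt ((j : ℕ) - i + s) hpos
    omega⟩

theorem kappaFun_injective (n i s : ℕ) : Function.Injective (kappaFun n i s) := by
  intro a b hab
  unfold kappaFun at hab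
  by_cases ha : (a : ℕ) < i <;> by_cases hb : (b : ℕ) < i
  · rw [dif_pos ha, dif_pos hb] at hab
    exact hab
  · rw [dif_pos ha, dif_neg hb] at hab
    have h := congrArg Fin.val hab
    simp only at h
    omega
  · rw [dif_neg ha, dif_pos hb] at hab
    have h := congrArg Fin.val hab
    simp only at h
    omega
  · rw [dif_neg ha, dif_neg hb] at hab
    have h := congrArg Fin.val hab
    simp only at h
    have h1 : ((a : ℕ) - i + s) % (n - i) = ((b : ℕ) - i + s) % (n - i) := by omega
    have h2 : ((a : ℕ) - i) % (n - i) = ((b : ℕ) - i) % (n - i) :=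
      Nat.ModEq.add_right_cancel' s h1
    have ha' : (a : ℕ) - i < n - i := by have := a.isLt; omega
    have hb' : (b : ℕ) - i < n - i := by have := b.isLt; omega
    rw [Nat.mod_eq_of_lt ha', Nat.mod_eq_of_lt hb'] at h2
    exact Fin.ext (by omega)

/-- The suffix block transposition `κ_{i,s}` as a permutation of `Fin n`. -/
noncomputable def kappa (n i s : ℕ) : Equiv.Perm (Fin n) :=
  Equiv.ofBijective _ (Finite.injective_iff_bijective.mp (kappaFun_injective n i s))

/-- `V_n`: vectors `[a_0,…,a_{n-1}]` with `1 ≤ a_j ≤ j+1` for each `j`. -/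
def Vn (n : ℕ) : Set (Fin n → ℕ) :=
  {a | ∀ j : Fin n, 1 ≤ a j ∧ a j ≤ (j : ℕ) + 1}

/-- `Φ([a_0,…,a_{n-1}]) = κ_{n-2,a_1} ∘ κ_{n-3,a_2} ∘ ⋯ ∘ κ_{1,a_{n-2}} ∘ κ_{0,a_{n-1}}`
(the factor for `j = 0` is `κ_{n-1,a_0}`, which is the identity permutation). -/
noncomputable def Phi (n : ℕ) (a : Fin n → ℕ) : Equiv.Perm (Fin n) :=
  ((List.finRange n).map (fun (j : Fin n) => kappa n (n - 1 - (j : ℕ)) (a j))).prod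

/-- `W_{T,n}`: vectors in `V_n` whose parity (sum of components) is `≡ T (mod n)`. -/
def Wset (n : ℕ) (T : ℤ) : Set (Fin n → ℕ) :=
  {a | a ∈ Vn n ∧ Int.ModEq (n : ℤ) ((∑ j, a j : ℕ) : ℤ) T}

/-- `C_{T,n} = {(Φ(α))⁻¹ : α ∈ W_{T,n}}`. -/
def Cset (n : ℕ) (T : ℤ) : Set (Equiv.Perm (Fin n)) :=
  {π | ∃ a ∈ Wset n T, π = (Phi n a)⁻¹}

/-- `cinv n π j = π⁻¹(j)` as a natural number (junk value `0` out of range). -/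
def cinv (n : ℕ) (π : Equiv.Perm (Fin n)) (j : ℕ) : ℕ :=
  if h : j < n then (π.symm ⟨j, h⟩ : ℕ) else 0

/-- The `i`-th component of a vector indexed by `Fin n` (junk value `0` out of range). -/
def Rcomp (n : ℕ) (v : Fin n → ℕ) (i : ℕ) : ℕ :=
  if h : i < n then v ⟨i, h⟩ else 0

section Kappa

variable {n i s : ℕ}

lemma kappa_apply_of_lt {v : Fin n} (hv : (v : ℕ) < i) : kappa n i s v = v := by
  simp [kappa, kappaFun, hv]

lemma kappa_apply_sub (hs : 1 ≤ s) (hsi : s ≤ n - i) :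
    kappa n i s ⟨n - s, by omega⟩ = ⟨i, by omega⟩ := by
  ext
  have hi : ¬ n - s < i := by omega
  simp only [kappa, Equiv.ofBijective_apply, kappaFun, hi, dite_false]
  rw [show n - s - i + s = n - i by omega, Nat.mod_self, add_zero]

end Kappa

noncomputable def phiPrefix (n : ℕ) (a : Fin n → ℕ) (m : ℕ) : Equiv.Perm (Fin n) :=
  (((List.finRange n).map fun j : Fin n => kappa n (n - 1 - j) (a j)).take m).prod

section PhiPrefix

variable {n : ℕ} {a b : Fin n → ℕ} {m : ℕ}

lemma phiPrefix_self : phiPrefix n a n = Phi n a := by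
  rw [phiPrefix, List.take_of_length_le (by simp), Phi]

lemma phiPrefix_zero : phiPrefix n a 0 = 1 := by
  simp [phiPrefix]

lemma phiPrefix_succ (hm : m < n) :
    phiPrefix n a (m + 1) = phiPrefix n a m * kappa n (n - 1 - m) (a ⟨m, hm⟩) := by
  rw [phiPrefix, List.prod_take_succ _ _ (by simpa using hm)]
  simp [phiPrefix]

lemma phiPrefix_apply_of_add_lt {v : Fin n} (hv : (v : ℕ) + m < n) : phiPrefix n a m v = v := by
  induction m with
  | zero => simp [phiPrefix_zero]
  | succ m ih =>
    rw [phiPrefix_succ (by omega), Equiv.Perm.mul_apply, kappa_apply_of_lt (by omega),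
      ih (by omega)]

lemma phiPrefix_succ_apply (ha : a ∈ Vn n) (hm : m < n) :
    phiPrefix n a (m + 1) ⟨n - a ⟨m, hm⟩, by have := (ha ⟨m, hm⟩).1; omega⟩ =
      ⟨n - 1 - m, by omega⟩ := by
  obtain ⟨h1, h2⟩ := ha ⟨m, hm⟩
  rw [phiPrefix_succ hm, Equiv.Perm.mul_apply, kappa_apply_sub h1 (by simp only at h2; omega),
    phiPrefix_apply_of_add_lt (by simp only; omega)]

lemma eq_of_phiPrefix_eq (ha : a ∈ Vn n) (hb : b ∈ Vn n) (hm : m ≤ n)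
    (h : phiPrefix n a m = phiPrefix n b m) (j : Fin n) (hj : (j : ℕ) < m) : a j = b j := by
  induction m with
  | zero => omega
  | succ m ih =>
    have hlast : a ⟨m, hm⟩ = b ⟨m, hm⟩ := by
      have hv := phiPrefix_succ_apply ha hm
      rw [h, ← phiPrefix_succ_apply hb hm] at hv
      have := congrArg Fin.val ((Equiv.injective _) hv)
      have := (ha ⟨m, hm⟩).2
      have := (hb ⟨m, hm⟩).2
      simp only at *
      omega
    have hprev : phiPrefix n a m = phiPrefix n b m := by
      rw [phiPrefix_succ hm, phiPrefix_succ hm, hlast] at h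
      exact mul_right_cancel h
    rcases Nat.lt_succ_iff_lt_or_eq.mp hj with hj | hj
    · exact ih (Nat.le_of_succ_le hm) hprev hj
    · rwa [show j = ⟨m, hm⟩ from Fin.ext hj]

end PhiPrefix

lemma injOn_Phi (n : ℕ) : Set.InjOn (Phi n) (Vn n) := fun a ha b hb h =>
  funext fun j => eq_of_phiPrefix_eq ha hb le_rfl (by rwa [phiPrefix_self, phiPrefix_self]) j j.isLt

lemma ncard_Vn (n : ℕ) : (Vn n).ncard = Nat.factorial n := by
  classical
  have : Vn n = ↑(Fintype.piFinset fun j : Fin n => Finset.Icc 1 ((j : ℕ) + 1)) := by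
    ext a
    simp only [Vn, Set.mem_ofPred_eq, Finset.mem_coe, Fintype.mem_piFinset, Finset.mem_Icc]
  rw [this, Set.ncard_coe_finset, Fintype.card_piFinset]
  simp [Fin.prod_univ_eq_prod_range (fun j => j + 1), Finset.prod_range_add_one_eq_factorial]

lemma exists_mem_Icc_intModEq {n : ℕ} (hn : 0 < n) (z : ℤ) :
    ∃ x : ℕ, x ∈ Finset.Icc 1 n ∧ (x : ℤ) ≡ z [ZMOD n] := by
  have h0 : 0 ≤ (z - 1) % n := Int.emod_nonneg _ (by omega)
  have h1 : (z - 1) % n < n := Int.emod_lt_of_pos _ (by omega)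
  refine ⟨((z - 1) % n).toNat + 1, Finset.mem_Icc.mpr ⟨by omega, by omega⟩, ?_⟩
  have := (Int.mod_modEq (z - 1) n).add_right 1
  push_cast
  rw [Int.toNat_of_nonneg h0]
  simpa using this

lemma eq_of_mem_Icc_of_intModEq {n x y : ℕ} (hx : x ∈ Finset.Icc 1 n) (hy : y ∈ Finset.Icc 1 n)
    (h : (x : ℤ) ≡ y [ZMOD n]) : x = y := by
  rw [Finset.mem_Icc] at hx hy
  rw [Int.natCast_modEq_iff, show x = x - 1 + 1 by omega, show y = y - 1 + 1 by omega] at h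
  have := (Nat.ModEq.add_right_cancel' 1 h).eq_of_lt_of_lt (by omega) (by omega)
  omega

lemma mem_Wset_succ_iff {m : ℕ} {T : ℤ} {a : Fin (m + 1) → ℕ} :
    a ∈ Wset (m + 1) T ↔ Fin.init a ∈ Vn m ∧ a (Fin.last m) ∈ Finset.Icc 1 (m + 1) ∧
      ((∑ j, Fin.init a j : ℕ) : ℤ) + a (Fin.last m) ≡ T [ZMOD (m + 1 : ℕ)] := by
  simp only [Wset, Vn, Set.mem_ofPred_eq, Fin.forall_fin_succ' (P := fun j => 1 ≤ a j ∧ _),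
    Fin.sum_univ_castSucc, Finset.mem_Icc, Fin.init, Fin.val_castSucc, Fin.val_last, and_assoc]
  push_cast
  rfl

lemma ncard_Wset_succ (m : ℕ) (T : ℤ) : (Wset (m + 1) T).ncard = (Vn m).ncard := by
  refine Set.ncard_congr (fun a _ => Fin.init a) (fun a ha => (mem_Wset_succ_iff.mp ha).1) ?_ ?_
  · intro a b ha hb hab
    obtain ⟨-, ha₁, ha₂⟩ := mem_Wset_succ_iff.mp ha
    obtain ⟨-, hb₁, hb₂⟩ := mem_Wset_succ_iff.mp hb
    rw [hab] at ha₂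
    have hlast := eq_of_mem_Icc_of_intModEq ha₁ hb₁ (Int.ModEq.add_left_cancel' _ (ha₂.trans hb₂.symm))
    rw [← Fin.snoc_init_self a, ← Fin.snoc_init_self b, hab, hlast]
  · intro c hc
    obtain ⟨x, hx, hxT⟩ := exists_mem_Icc_intModEq (Nat.succ_pos m) (T - ∑ j, c j)
    refine ⟨Fin.snoc c x, mem_Wset_succ_iff.mpr ?_, Fin.init_snoc _ _⟩
    simp only [Fin.init_snoc, Fin.snoc_last]
    refine ⟨hc, hx, ?_⟩
    simpa using hxT.add_left ((∑ j, c j : ℕ) : ℤ)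

theorem stmt_3 (n : ℕ) (hn : 2 ≤ n) (T : ℤ) :
    (Cset n T).ncard = Nat.factorial (n - 1) := by
  obtain ⟨m, rfl⟩ : ∃ m, n = m + 1 := ⟨n - 1, by omega⟩
  have hC : Cset (m + 1) T = (fun a => (Phi (m + 1) a)⁻¹) '' Wset (m + 1) T := by
    ext π
    simp only [Cset, Set.mem_ofPred_eq, Set.mem_image]
    exact exists_congr fun a => and_congr_right fun _ => eq_comm
  have hinj : Set.InjOn (fun a => (Phi (m + 1) a)⁻¹) (Wset (m + 1) T) :=
    inv_injective.comp_injOn ((injOn_Phi (m + 1)).mono fun a ha => ha.1)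
  rw [hC, hinj.ncard_image, ncard_Wset_succ, ncard_Vn, Nat.add_sub_cancel]
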